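/- Let l be a prime and S a type, with integer coefficients. For all finitely supported functions f, w : S →₀ ℤ there exists T : (ZMod l → S) →₀ ℤ such that P (f + l • w) − P f = l • ϖ(T), where ϖ(T) = ∑_{j : ZMod l} (j • T) is the sum of T over the cyclic shift action. In other words, if two integral cycles are congruent modulo l, then their l-th external powers differ by an element of the image of the map l·ϖ. (This is the key lemma showing that the total reduced power operation with ℤ/l coefficients lifts through the modified integral fixed-point sheaf z(𝔸^{nl})^{C_l}/Im(lϖ).) -/
import Mathlib

open Finset

section aux
variable {l : ℕ} [NeZero l] {S : Type*}

noncomputable def Gmix (f w : S →₀ ℤ) (A : Finset (ZMod l)) : (ZMod l → S) →₀ ℤ :=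
  Finsupp.onFinset (Fintype.piFinset fun i => if i ∈ A then w.support else f.support)
    (fun x => ∏ i, if i ∈ A then w (x i) else f (x i))
    (by
      intro x hx
      rw [Fintype.mem_piFinset]
      intro i
      have h := Finset.prod_ne_zero_iff.mp hx i (Finset.mem_univ i)
      by_cases hi : i ∈ A <;> simp only [hi, if_true, if_false] at h ⊢ <;>
        simpa using h)

lemma Gmix_apply (f w : S →₀ ℤ) (A : Finset (ZMod l)) (x : ZMod l → S) :
    Gmix f w A x = ∏ i, if i ∈ A then w (x i) else f (x i) := rfl

lemma Gmix_shift (f w : S →₀ ℤ) (A : Finset (ZMod l)) (j : ZMod l) (x : ZMod l → S) :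
    Gmix f w A (fun i => x (i + j)) = Gmix f w (A.image (· + j)) x := by
  rw [Gmix_apply, Gmix_apply]
  rw [← Equiv.prod_comp (Equiv.addRight j)
    (fun k => if k ∈ A.image (· + j) then w (x k) else f (x k))]
  refine Finset.prod_congr rfl fun i _ => ?_
  have h2 : (i + j ∈ A.image (· + j)) ↔ (i ∈ A) := by
    rw [Finset.mem_image]
    constructor
    · rintro ⟨a, ha, h⟩
      obtain rfl : a = i := add_right_cancel h
      exact ha
    · intro hi; exact ⟨i, hi, rfl⟩
  simp only [Equiv.coe_addRight, h2]

noncomputable def cf (l : ℕ) [NeZero l] (A : Finset (ZMod l)) : ℤ :=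
  if A = ∅ then 0 else if A.card = 1 then (if A = {0} then 1 else 0)
  else (l : ℤ) ^ (A.card - 2)

lemma card_image_shift (A : Finset (ZMod l)) (j : ZMod l) :
    (A.image (· + j)).card = A.card :=
  Finset.card_image_of_injective A (add_left_injective j)

lemma key_coeff (B : Finset (ZMod l)) :
    (l : ℤ) * ∑ j : ZMod l, cf l (B.image (· + j)) =
      if B = ∅ then 0 else (l : ℤ) ^ B.card := by
  rcases eq_or_ne B ∅ with rfl | hB
  · simp [cf]
  rcases eq_or_lt_of_le (Finset.one_le_card.mpr (Finset.nonempty_iff_ne_empty.mpr hB))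
    with h1 | h2
  · -- card B = 1
    obtain ⟨s, rfl⟩ := Finset.card_eq_one.mp h1.symm
    have : ∀ j : ZMod l, cf l (({s} : Finset (ZMod l)).image (· + j))
        = if j = -s then 1 else 0 := by
      intro j
      have himg : ({s} : Finset (ZMod l)).image (· + j) = {s + j} := by simp
      rw [himg, cf]
      simp only [Finset.singleton_ne_empty, if_false, Finset.card_singleton, if_true]
      have : ({s + j} : Finset (ZMod l)) = {0} ↔ j = -s := by
        rw [Finset.singleton_inj]
        constructor
        · intro h; linear_combination h
        · intro h; rw [h]; ring
      simp [this]
    rw [Finset.sum_congr rfl fun j _ => this j]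
    rw [Finset.sum_ite_eq' Finset.univ (-s) (fun _ => (1 : ℤ))]
    simp [hB]
  · -- 2 ≤ card B
    have hc : ∀ j : ZMod l, cf l (B.image (· + j)) = (l : ℤ) ^ (B.card - 2) := by
      intro j
      rw [cf, card_image_shift]
      have hne : B.image (· + j) ≠ ∅ := fun h => hB (Finset.image_eq_empty.mp h)
      rw [if_neg hne, if_neg (by omega)]
    rw [Finset.sum_congr rfl fun j _ => hc j, Finset.sum_const, Finset.card_univ,
      ZMod.card l, if_neg hB]
    rw [nsmul_eq_mul]
    have : (l : ℤ) * ((l:ℤ) * (l:ℤ) ^ (B.card - 2)) = (l:ℤ) ^ (B.card - 2 + 2) := by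
      ring
    rw [this, Nat.sub_add_cancel (by omega)]


lemma expand_prod (f w : S →₀ ℤ) (x : ZMod l → S) :
    (∏ i, (f (x i) + (l : ℤ) * w (x i))) - ∏ i, f (x i)
      = ∑ A : Finset (ZMod l), (if A = ∅ then 0 else (l : ℤ) ^ A.card) * Gmix f w A x := by
  have hG : ∀ A : Finset (ZMod l), Gmix f w A x
      = (∏ i ∈ A, w (x i)) * ∏ i ∈ Aᶜ, f (x i) := by
    intro A
    rw [Gmix_apply, Finset.prod_ite]
    congr 1
    · congr 1
      ext i; simp
    · congr 1
      ext i; simp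
  have hprod : (∏ i, (f (x i) + (l : ℤ) * w (x i)))
      = ∑ A : Finset (ZMod l), ((l : ℤ) ^ A.card) * Gmix f w A x := by
    have := Finset.prod_add (fun i : ZMod l => (l : ℤ) * w (x i))
      (fun i : ZMod l => f (x i)) Finset.univ
    simp only [add_comm] at this
    rw [this, Finset.powerset_univ]
    refine Finset.sum_congr rfl fun A _ => ?_
    rw [hG, Finset.prod_mul_distrib, Finset.prod_const, ← Finset.compl_eq_univ_sdiff]
    ring
  have hG0 : Gmix f w ∅ x = ∏ i, f (x i) := by
    rw [hG]; simp
  have h0 : ∀ A : Finset (ZMod l),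
      (if A = ∅ then 0 else (l : ℤ) ^ A.card) * Gmix f w A x
        = (l : ℤ) ^ A.card * Gmix f w A x - (if A = ∅ then Gmix f w A x else 0) := by
    intro A
    split_ifs with h
    · simp [h]
    · ring
  rw [Finset.sum_congr rfl fun A _ => h0 A, Finset.sum_sub_distrib,
    Finset.sum_ite_eq' Finset.univ (∅ : Finset (ZMod l)) (fun A => Gmix f w A x)]
  simp [hprod, hG0]

end aux

/-- If two integral cycles are congruent modulo `l`, then their `l`-th external
powers differ by an element of the image of `l·ϖ`, where
`ϖ(T) = ∑_{j : ZMod l} j • T` is the sum over the cyclic shift action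
(`j` acts by `g ↦ (x ↦ g (i ↦ x (i + j)))`).  This is the key lemma showing
that the total reduced power operation with `ℤ/l` coefficients lifts through
`z(𝔸^{nl})^{C_l}/Im(lϖ)`. -/
theorem external_power_mod_l_lifts (l : ℕ) (hl : Nat.Prime l) [NeZero l]
    (S : Type*)
    (P : (S →₀ ℤ) → ((ZMod l → S) →₀ ℤ))
    (hP : ∀ (f : S →₀ ℤ) (x : ZMod l → S), P f x = ∏ i : ZMod l, f (x i))
    (σ : ZMod l → ((ZMod l → S) →₀ ℤ) →+ ((ZMod l → S) →₀ ℤ))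
    (hσ : ∀ (j : ZMod l) (g : (ZMod l → S) →₀ ℤ) (x : ZMod l → S),
      σ j g x = g (fun i => x (i + j))) :
    ∀ f w : S →₀ ℤ, ∃ T : (ZMod l → S) →₀ ℤ,
      P (f + l • w) - P f = l • ∑ j : ZMod l, σ j T := by
  intro f w
  classical
  refine ⟨∑ A : Finset (ZMod l), cf l A • Gmix f w A, ?_⟩
  set T : (ZMod l → S) →₀ ℤ := ∑ A : Finset (ZMod l), cf l A • Gmix f w A with hT
  ext x
  rw [Finsupp.sub_apply, hP, hP, Finsupp.smul_apply]
  have hTval : ∀ y : ZMod l → S, T y = ∑ A : Finset (ZMod l), cf l A * Gmix f w A y := by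
    intro y
    rw [hT, Finsupp.finset_sum_apply]
    exact Finset.sum_congr rfl fun A _ => by rw [Finsupp.smul_apply, smul_eq_mul]
  have happ : (∑ j : ZMod l, σ j T) x = ∑ j : ZMod l, T (fun i => x (i + j)) := by
    rw [Finsupp.finset_sum_apply]
    exact Finset.sum_congr rfl fun j _ => hσ j T x
  have hstep : ∀ j : ZMod l, T (fun i => x (i + j))
      = ∑ B : Finset (ZMod l), cf l (B.image (· + (-j))) * Gmix f w B x := by
    intro j
    rw [hTval, Finset.sum_congr rfl fun A _ => by rw [Gmix_shift f w A j x]]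
    refine Fintype.sum_equiv (Equiv.addRight j).finsetCongr _ _ fun A => ?_
    have himg : ∀ C : Finset (ZMod l), (C.image (· + j)).image (· + (-j)) = C := by
      intro C
      rw [Finset.image_image]
      ext a
      simp [Function.comp]
    simp only [Equiv.finsetCongr_apply, Finset.map_eq_image, Equiv.coe_toEmbedding,
      Equiv.coe_addRight, himg]
  rw [happ, Finset.sum_congr rfl fun j _ => hstep j, Finset.sum_comm]
  have hswap : ∀ B : Finset (ZMod l),
      (∑ j : ZMod l, cf l (B.image (· + (-j)))) = ∑ j : ZMod l, cf l (B.image (· + j)) := by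
    intro B
    exact Fintype.sum_equiv (Equiv.neg (ZMod l)) _ _ fun j => by simp
  have hLHS : ∀ i : ZMod l, (f + l • w) (x i) = f (x i) + (l : ℤ) * w (x i) := by
    intro i
    simp [Finsupp.add_apply, Finsupp.smul_apply, nsmul_eq_mul]
  rw [Finset.prod_congr rfl fun i _ => hLHS i, expand_prod f w x, nsmul_eq_mul,
    Finset.mul_sum]
  refine Finset.sum_congr rfl fun B _ => ?_
  rw [← Finset.sum_mul, ← mul_assoc, hswap B, key_coeff B]
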